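/- arXiv:2302.11828 — 2 statements merged into one kernel-verified Lean document; each statement's English description precedes it below -/
import Mathlib

section
/- Suppose (Ω, u, p) solves the coupled complex boundary Stokes system: −αΔu + ∇p = f and ∇·u = 0 in Ω, u = g on Γ, and −p n + α ∂u/∂n + i(u·n)n = 0 on Σ, where u = u_r + i u_i and p = p_r + i p_i with f, g real. If u_i = 0 and p_i = 0 in Ω, then (Ω, u_r, p_r) solves the overdetermined free boundary problem: −αΔu_r + ∇p_r = f, ∇·u_r = 0 in Ω, u_r = g on Γ, −p_r n + α ∂u_r/∂n = 0 on Σ, and u_r·n = 0 on Σ. Conversely, any solution of the overdetermined problem gives a solution of the complex system with vanishing imaginary part. -/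
open scoped BigOperators
open Filter MeasureTheory

noncomputable def pd {d : ℕ} (f : (Fin d → ℝ) → ℝ) (j : Fin d) (x : Fin d → ℝ) : ℝ :=
  fderiv ℝ f x (Pi.single j 1)

noncomputable def jac {d : ℕ} (θ : (Fin d → ℝ) → (Fin d → ℝ)) (x : Fin d → ℝ) :
    Matrix (Fin d) (Fin d) ℝ :=
  Matrix.of fun i j => pd (fun y => θ y i) j x

noncomputable def divg {d : ℕ} (θ : (Fin d → ℝ) → (Fin d → ℝ)) (x : Fin d → ℝ) : ℝ :=
  ∑ i, pd (fun y => θ y i) i x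

def dot {d : ℕ} (a b : Fin d → ℝ) : ℝ := ∑ i, a i * b i

def outer {d : ℕ} (a b : Fin d → ℝ) : Matrix (Fin d) (Fin d) ℝ :=
  Matrix.of fun i j => a i * b j

/-- Partial derivative of a complex-valued scalar field. -/
noncomputable def pdC {d : ℕ} (f : (Fin d → ℝ) → ℂ) (j : Fin d) (x : Fin d → ℝ) : ℂ :=
  fderiv ℝ f x (Pi.single j 1)

/-- Laplacian of a complex scalar field. -/
noncomputable def lapC {d : ℕ} (f : (Fin d → ℝ) → ℂ) (x : Fin d → ℝ) : ℂ :=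
  ∑ j, pdC (fun y => pdC f j y) j x

/-- Laplacian of a real scalar field. -/
noncomputable def lapR {d : ℕ} (f : (Fin d → ℝ) → ℝ) (x : Fin d → ℝ) : ℝ :=
  ∑ j, pd (fun y => pd f j y) j x

/-- Complex divergence. -/
noncomputable def divC {d : ℕ} (u : (Fin d → ℝ) → (Fin d → ℂ)) (x : Fin d → ℝ) : ℂ :=
  ∑ i, pdC (fun y => u y i) i x

/-- The coupled complex boundary Stokes system \eqref{eq:ccbm}. -/
def ComplexSystem {d : ℕ} (Ω Γ Sg : Set (Fin d → ℝ)) (α : ℝ)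
    (u : (Fin d → ℝ) → (Fin d → ℂ)) (p : (Fin d → ℝ) → ℂ)
    (f g : (Fin d → ℝ) → (Fin d → ℝ)) (nf : (Fin d → ℝ) → (Fin d → ℝ)) : Prop :=
  (∀ x ∈ Ω, (∀ i, -(α : ℂ) * lapC (fun y => u y i) x + pdC p i x = (f x i : ℂ))
      ∧ divC u x = 0)
  ∧ (∀ x ∈ Γ, ∀ i, u x i = (g x i : ℂ))
  ∧ (∀ x ∈ Sg, ∀ i,
      -(p x) * (nf x i : ℂ)
        + (α : ℂ) * (∑ j, pdC (fun y => u y i) j x * (nf x j : ℂ))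
        + Complex.I * (∑ k, u x k * (nf x k : ℂ)) * (nf x i : ℂ) = 0)

/-- The overdetermined (real) free boundary Stokes problem \eqref{eq:FSP}. -/
def OverdeterminedSystem {d : ℕ} (Ω Γ Sg : Set (Fin d → ℝ)) (α : ℝ)
    (v : (Fin d → ℝ) → (Fin d → ℝ)) (q : (Fin d → ℝ) → ℝ)
    (f g : (Fin d → ℝ) → (Fin d → ℝ)) (nf : (Fin d → ℝ) → (Fin d → ℝ)) : Prop :=
  (∀ x ∈ Ω, (∀ i, -α * lapR (fun y => v y i) x + pd q i x = f x i) ∧ divg v x = 0)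
  ∧ (∀ x ∈ Γ, ∀ i, v x i = g x i)
  ∧ (∀ x ∈ Sg,
      (∀ i, -(q x) * nf x i + α * (∑ j, pd (fun y => v y i) j x * nf x j) = 0)
      ∧ dot (v x) (nf x) = 0)

/-! A real pair `(v, q)` solves the complex system exactly when it solves the overdetermined
one: the interior and Dirichlet equations are real, and the condition on `Σ` splits into its real
part `-q n + α ∂v/∂n = 0` and its imaginary part `(v·n) n = 0`, which forces `v·n = 0` because
`(v·n)² = ∑ᵢ vᵢ (v·n) nᵢ`. If `u, p` are real only on the open set `Ω`, they and the first
derivatives of `u` still agree with those of their real parts on `closure Ω ⊇ Γ ∪ Σ` by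
continuity, so the complex system passes to the real parts. -/

open Set

section Derivatives

variable {d : ℕ}

-- Also where `h` is not differentiable: then neither side is, and both derivatives are junk `0`.
lemma pdC_ofReal (h : (Fin d → ℝ) → ℝ) (j : Fin d) (x : Fin d → ℝ) :
    pdC (fun y => (h y : ℂ)) j x = pd h j x := by
  unfold pdC pd
  by_cases hh : DifferentiableAt ℝ h x
  · rw [show (fun y => (h y : ℂ)) = Complex.ofRealCLM ∘ h from rfl,
      fderiv_comp x Complex.ofRealCLM.differentiableAt hh, ContinuousLinearMap.fderiv]
    rfl
  · have hC : ¬DifferentiableAt ℝ (fun y => (h y : ℂ)) x := fun hC =>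
      hh (Complex.reCLM.differentiableAt.comp x hC)
    simp [fderiv_zero_of_not_differentiableAt hh, fderiv_zero_of_not_differentiableAt hC]

lemma lapC_ofReal (h : (Fin d → ℝ) → ℝ) (x : Fin d → ℝ) :
    lapC (fun y => (h y : ℂ)) x = lapR h x := by
  simp only [lapC, lapR, pdC_ofReal, Complex.ofReal_sum]

lemma divC_ofReal (v : (Fin d → ℝ) → (Fin d → ℝ)) (x : Fin d → ℝ) :
    divC (fun y i => (v y i : ℂ)) x = divg v x := by
  simp only [divC, divg, pdC_ofReal, Complex.ofReal_sum]

lemma eqOn_pdC {s : Set (Fin d → ℝ)} {f f' : (Fin d → ℝ) → ℂ} (hs : IsOpen s) (h : EqOn f f' s)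
    (j : Fin d) : EqOn (pdC f j) (pdC f' j) s := fun x hx => by
  simp only [pdC, (h.eventuallyEq_of_mem (hs.mem_nhds hx)).fderiv_eq]

lemma eqOn_lapC {s : Set (Fin d → ℝ)} {f f' : (Fin d → ℝ) → ℂ} (hs : IsOpen s) (h : EqOn f f' s) :
    EqOn (lapC f) (lapC f') s := fun _ hx =>
  Finset.sum_congr rfl fun j _ => eqOn_pdC hs (eqOn_pdC hs h j) j hx

lemma eqOn_divC {s : Set (Fin d → ℝ)} {u u' : (Fin d → ℝ) → (Fin d → ℂ)} (hs : IsOpen s)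
    (h : ∀ i, EqOn (fun y => u y i) (fun y => u' y i) s) : EqOn (divC u) (divC u') s :=
  fun _ hx => Finset.sum_congr rfl fun i _ => eqOn_pdC hs (h i) i hx

lemma continuous_pdC {f : (Fin d → ℝ) → ℂ} (hf : ContDiff ℝ 1 f) (j : Fin d) :
    Continuous (pdC f j) :=
  (hf.continuous_fderiv one_ne_zero).clm_apply continuous_const

lemma eqOn_closure_pdC {s : Set (Fin d → ℝ)} {f f' : (Fin d → ℝ) → ℂ} (hs : IsOpen s)
    (hf : ContDiff ℝ 1 f) (hf' : ContDiff ℝ 1 f') (h : EqOn f f' s) (j : Fin d) :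
    EqOn (pdC f j) (pdC f' j) (closure s) :=
  (eqOn_pdC hs h j).closure (continuous_pdC hf j) (continuous_pdC hf' j)

end Derivatives

lemma dot_eq_zero_of_forall_mul_eq_zero {d : ℕ} {a b : Fin d → ℝ}
    (h : ∀ i, dot a b * b i = 0) : dot a b = 0 := by
  refine mul_self_eq_zero.mp ?_
  calc dot a b * dot a b = ∑ i, a i * (dot a b * b i) := by
        rw [dot, Finset.mul_sum]; exact Finset.sum_congr rfl fun i _ => by ring
    _ = 0 := by simp [h]

lemma Complex.ofReal_add_I_mul_ofReal_eq_zero {a b : ℝ} :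
    (a : ℂ) + Complex.I * b = 0 ↔ a = 0 ∧ b = 0 := by
  simp [Complex.ext_iff]

lemma complexSystem_ofReal_iff {d : ℕ} {Ω Γ Sg : Set (Fin d → ℝ)} {α : ℝ}
    {v : (Fin d → ℝ) → (Fin d → ℝ)} {q : (Fin d → ℝ) → ℝ}
    {f g nf : (Fin d → ℝ) → (Fin d → ℝ)} :
    ComplexSystem Ω Γ Sg α (fun x i => (v x i : ℂ)) (fun x => (q x : ℂ)) f g nf ↔
      OverdeterminedSystem Ω Γ Sg α v q f g nf := by
  have hbdry : ∀ x i,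
      -(q x : ℂ) * nf x i + α * (∑ j, pdC (fun y => (v y i : ℂ)) j x * nf x j)
          + Complex.I * (∑ k, (v x k : ℂ) * nf x k) * nf x i =
        ((-(q x) * nf x i + α * (∑ j, pd (fun y => v y i) j x * nf x j) : ℝ) : ℂ)
          + Complex.I * ((dot (v x) (nf x) * nf x i : ℝ) : ℂ) := by
    intro x i
    simp only [pdC_ofReal, dot]
    push_cast
    ring
  unfold ComplexSystem OverdeterminedSystem
  simp only [hbdry]
  simp only [Complex.ofReal_add_I_mul_ofReal_eq_zero, lapC_ofReal, divC_ofReal, pdC_ofReal]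
  norm_cast
  refine and_congr_right' <| and_congr_right' <|
    forall₂_congr fun x _ => forall_and.trans (and_congr_right' ?_)
  exact ⟨dot_eq_zero_of_forall_mul_eq_zero, fun h i => by rw [h, zero_mul]⟩

lemma ComplexSystem.of_eqOn {d : ℕ} {Ω Γ Sg : Set (Fin d → ℝ)} {α : ℝ}
    {u u' : (Fin d → ℝ) → (Fin d → ℂ)} {p p' : (Fin d → ℝ) → ℂ}
    {f g nf : (Fin d → ℝ) → (Fin d → ℝ)} (hΩ : IsOpen Ω) (hΓ : Γ ⊆ closure Ω)
    (hSg : Sg ⊆ closure Ω) (hu : ∀ i, EqOn (fun y => u y i) (fun y => u' y i) (closure Ω))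
    (hp : EqOn p p' (closure Ω))
    (hdu : ∀ i j, EqOn (pdC (fun y => u y i) j) (pdC (fun y => u' y i) j) Sg)
    (h : ComplexSystem Ω Γ Sg α u p f g nf) : ComplexSystem Ω Γ Sg α u' p' f g nf := by
  obtain ⟨hint, hdir, hbdry⟩ := h
  have huΩ i := (hu i).mono subset_closure
  refine ⟨fun x hx => ⟨fun i => ?_, ?_⟩, fun x hx i => ?_, fun x hx i => ?_⟩
  · rw [← eqOn_lapC hΩ (huΩ i) hx, ← eqOn_pdC hΩ (hp.mono subset_closure) i hx]
    exact (hint x hx).1 i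
  · rw [← eqOn_divC hΩ huΩ hx]
    exact (hint x hx).2
  · exact (hu i (hΓ hx)).symm.trans (hdir x hx i)
  · have hux k : u x k = u' x k := hu k (hSg hx)
    have hdux k j : pdC (fun y => u y k) j x = pdC (fun y => u' y k) j x := hdu k j hx
    simpa only [hux, hdux, hp (hSg hx)] using hbdry x hx i

theorem stmt16_general {d : ℕ} (Ω Γ Sg : Set (Fin d → ℝ)) (hΩ : IsOpen Ω)
    (hΓ : Γ ⊆ closure Ω) (hSg : Sg ⊆ closure Ω) (α : ℝ)
    (u : (Fin d → ℝ) → (Fin d → ℂ)) (p : (Fin d → ℝ) → ℂ)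
    (f g nf : (Fin d → ℝ) → (Fin d → ℝ))
    (hu : ContDiff ℝ 2 u) (hp : ContDiff ℝ 1 p) :
    (ComplexSystem Ω Γ Sg α u p f g nf →
      (∀ x ∈ Ω, (∀ i, (u x i).im = 0) ∧ (p x).im = 0) →
      OverdeterminedSystem Ω Γ Sg α (fun x i => (u x i).re) (fun x => (p x).re) f g nf)
    ∧ ((∀ x, (∀ i, (u x i).im = 0) ∧ (p x).im = 0) →
      OverdeterminedSystem Ω Γ Sg α (fun x i => (u x i).re) (fun x => (p x).re) f g nf →
      ComplexSystem Ω Γ Sg α u p f g nf) := by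
  have ofReal_re {z : ℂ} (hz : z.im = 0) : (z.re : ℂ) = z := Complex.ext rfl hz.symm
  refine ⟨fun hC him => complexSystem_ofReal_iff.mp ?_, fun him hO => ?_⟩
  · have hui i : ContDiff ℝ 1 (fun y => u y i) := (contDiff_pi.1 hu i).of_le one_le_two
    have hvi i : ContDiff ℝ 1 (fun y => ((u y i).re : ℂ)) :=
      Complex.ofRealCLM.contDiff.comp (Complex.reCLM.contDiff.comp (hui i))
    have huΩ i : EqOn (fun y => u y i) (fun y => ((u y i).re : ℂ)) Ω :=
      fun y hy => (ofReal_re ((him y hy).1 i)).symm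
    have hpΩ : EqOn p (fun y => ((p y).re : ℂ)) Ω := fun y hy => (ofReal_re (him y hy).2).symm
    have hpc := hp.continuous
    exact hC.of_eqOn hΩ hΓ hSg (fun i => (huΩ i).closure (hui i).continuous (hvi i).continuous)
      (hpΩ.closure hpc (by fun_prop))
      (fun i j => (eqOn_closure_pdC hΩ (hui i) (hvi i) (huΩ i) j).mono hSg)
  · have hu' : (fun x i => ((u x i).re : ℂ)) = u := funext₂ fun x i => ofReal_re ((him x).1 i)
    have hp' : (fun x => ((p x).re : ℂ)) = p := funext fun x => ofReal_re (him x).2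
    simpa only [hu', hp'] using complexSystem_ofReal_iff.mpr hO

/-- if `(Ω,u,p)` solves the coupled complex boundary Stokes system with real
data `f, g` and `u_i = 0`, `p_i = 0` in `Ω`, then the real parts solve the overdetermined
free boundary problem; conversely, a real solution of the overdetermined problem (i.e. a
complex solution with vanishing imaginary part) solves the complex system. -/
theorem stmt16 {d : ℕ} (Ω Γ Sg : Set (Fin d → ℝ)) (hΩ : IsOpen Ω)
    (hΓ : Γ ⊆ closure Ω) (hSg : Sg ⊆ closure Ω) (α : ℝ) (hα : 0 < α)
    (u : (Fin d → ℝ) → (Fin d → ℂ)) (p : (Fin d → ℝ) → ℂ)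
    (f g nf : (Fin d → ℝ) → (Fin d → ℝ))
    (hu : ContDiff ℝ 2 u) (hp : ContDiff ℝ 1 p)
    (hf : Continuous f) (hg : Continuous g) :
    (ComplexSystem Ω Γ Sg α u p f g nf →
      (∀ x ∈ Ω, (∀ i, (u x i).im = 0) ∧ (p x).im = 0) →
      OverdeterminedSystem Ω Γ Sg α (fun x i => (u x i).re) (fun x => (p x).re) f g nf)
    ∧ ((∀ x, (∀ i, (u x i).im = 0) ∧ (p x).im = 0) →
      OverdeterminedSystem Ω Γ Sg α (fun x i => (u x i).re) (fun x => (p x).re) f g nf →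
      ComplexSystem Ω Γ Sg α u p f g nf) :=
  stmt16_general Ω Γ Sg hΩ hΓ hSg α u p f g nf hu hp
end

section
/- Let θ be a C^{1,1} vector field and u a vector field in H²(U)^d on a bounded open set U ⊂ ℝ^d containing Ω̄, with T_t = id + tθ and I_t = det(DT_t). Then the map t ↦ I_t (u ∘ T_t) from [0,ε] to L²(Ω)^d is differentiable at t = 0 with derivative ∇·(u ⊗ θ) := (div(u₁θ), …, div(u_d θ))ᵀ, i.e., lim_{t→0} (I_t u∘T_t − u)/t = (div(u_j θ))_{j=1}^d componentwise in L²(Ω). -/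
open scoped BigOperators
open Filter MeasureTheory

/-!
Put `F(t, x) = det(1 + t Dθ(x)) u_j(x + t θ(x))`. For each `x`, `t ↦ F(t, x)` is differentiable
with a derivative `∂ₜF(t, x)` that is jointly continuous in `(t, x)`, and since
`d/dt det(1 + tA)|₀ = tr A`, `∂ₜF(0, x) = tr Dθ(x) u_j(x) + Du_j(x) θ(x) = div(u_j θ)(x)`.
By the mean value theorem the difference quotient `(F(t, x) - F(0, x)) / t` is `∂ₜF(c, x)` for
some `c ∈ (0, t)`, so uniform continuity of `∂ₜF` near `{0} × closure Ω` (a compact set) makes the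
quotient converge to `div(u_j θ)` uniformly on `Ω`. As `Ω` has finite measure, the squared
`L²` error tends to `0`.
-/

open Set Topology

section Det
variable {𝕜 : Type*} [NontriviallyNormedField 𝕜] {ι : Type*} [Fintype ι] [DecidableEq ι]

theorem contDiff_det_of {n : WithTop ℕ∞} :
    ContDiff 𝕜 n fun A : ι → ι → 𝕜 => (Matrix.of A).det := by
  simp only [Matrix.det_apply, Matrix.of_apply]
  refine ContDiff.sum fun σ _ => ContDiff.const_smul _ ?_
  refine contDiff_prod fun i _ => ?_
  exact (contDiff_apply_apply 𝕜 𝕜 (σ i) i)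

theorem hasDerivAt_det_one_add_smul_zero (A : Matrix ι ι 𝕜) :
    HasDerivAt (fun t : 𝕜 => (1 + t • A).det) A.trace 0 := by
  set q := (Matrix.det (1 + (Polynomial.X : Polynomial 𝕜) • A.map Polynomial.C)).divX.divX
  have hpoly : (fun t : 𝕜 => (1 + t • A).det) = fun t => 1 + A.trace * t + q.eval t * t ^ 2 :=
    funext fun t => Matrix.det_one_add_smul t A
  rw [hpoly]
  exact ((((hasDerivAt_id (0 : 𝕜)).const_mul A.trace).const_add 1).add
    ((q.hasDerivAt 0).mul (hasDerivAt_pow 2 (0 : 𝕜)))).congr_deriv (by simp)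

theorem hasDerivAt_det_one_add_smul (A : Matrix ι ι 𝕜) (t : 𝕜) :
    HasDerivAt (fun s : 𝕜 => (1 + s • A).det)
      (fderiv 𝕜 (fun M : ι → ι → 𝕜 => (Matrix.of M).det) (Matrix.of.symm (1 + t • A))
        (Matrix.of.symm A)) t := by
  have hpath : HasDerivAt (fun s : 𝕜 => Matrix.of.symm 1 + s • Matrix.of.symm A)
      (Matrix.of.symm A) t := by
    simpa using ((hasDerivAt_id t).smul_const (Matrix.of.symm A)).const_add (Matrix.of.symm 1)
  exact ((contDiff_det_of (n := 1)).differentiable one_ne_zero _).hasFDerivAt.comp_hasDerivAt t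
    hpath

theorem continuous_deriv_det_one_add_smul :
    Continuous fun p : 𝕜 × Matrix ι ι 𝕜 => deriv (fun s : 𝕜 => (1 + s • p.2).det) p.1 := by
  simp_rw [fun p : 𝕜 × Matrix ι ι 𝕜 => (hasDerivAt_det_one_add_smul p.2 p.1).deriv]
  have hfd := (contDiff_det_of (𝕜 := 𝕜) (ι := ι) (n := 1)).continuous_fderiv one_ne_zero
  exact (hfd.comp (continuous_const.add (continuous_fst.smul continuous_snd))).clm_apply
    continuous_snd

end Det

theorem tendstoUniformlyOn_slope_of_continuous_deriv {X : Type*} [TopologicalSpace X]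
    {K : Set X} (hK : IsCompact K) {F F' : ℝ → X → ℝ}
    (hF : ∀ t x, HasDerivAt (F · x) (F' t x) t) (hF' : Continuous (Function.uncurry F')) :
    TendstoUniformlyOn (fun t x => (F t x - F 0 x) / t) (F' 0) (𝓝[>] 0) K := by
  rw [Metric.tendstoUniformlyOn_iff]
  intro ε hε
  obtain ⟨v, hv, hvK⟩ := hK.mem_uniformity_of_prod hF'.continuousOn (mem_univ (0 : ℝ))
    (Metric.dist_mem_uniformity hε)
  obtain ⟨δ, hδ, hball⟩ := Metric.mem_nhds_iff.1 (nhdsWithin_univ (0 : ℝ) ▸ hv)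
  filter_upwards [Ioo_mem_nhdsGT hδ] with t ht x hx
  obtain ⟨c, hc, hslope⟩ := exists_hasDerivAt_eq_slope (F · x) (F' · x) ht.1
    (fun s _ => (hF s x).continuousAt.continuousWithinAt) (fun s _ => hF s x)
  rw [sub_zero] at hslope
  rw [← hslope, dist_comm]
  refine hvK c (hball ?_) x hx
  rw [Metric.mem_ball, Real.dist_eq, sub_zero, abs_of_pos hc.1]
  exact hc.2.trans ht.2

theorem tendstoUniformlyOn_slope_det_mul_comp {ι E : Type*} [Fintype ι] [DecidableEq ι]
    [NormedAddCommGroup E] [NormedSpace ℝ E] {K : Set E} (hK : IsCompact K)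
    {A : E → Matrix ι ι ℝ} (hA : Continuous A) {θ : E → E} (hθ : Continuous θ)
    {f : E → ℝ} (hf : ContDiff ℝ 1 f) :
    TendstoUniformlyOn (fun t x => ((1 + t • A x).det * f (x + t • θ x) - f x) / t)
      (fun x => (A x).trace * f x + fderiv ℝ f x (θ x)) (𝓝[>] 0) K := by
  have hpath : ∀ x t, HasDerivAt (fun s : ℝ => x + s • θ x) (θ x) t := fun x t => by
    simpa using ((hasDerivAt_id t).smul_const (θ x)).const_add x
  have hF : ∀ t x, HasDerivAt (fun s : ℝ => (1 + s • A x).det * f (x + s • θ x))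
      (deriv (fun s : ℝ => (1 + s • A x).det) t * f (x + t • θ x)
        + (1 + t • A x).det * fderiv ℝ f (x + t • θ x) (θ x)) t := fun t x =>
    (hasDerivAt_det_one_add_smul (A x) t).differentiableAt.hasDerivAt.mul
      ((hf.differentiable one_ne_zero _).hasFDerivAt.comp_hasDerivAt t (hpath x t))
  have hT : Continuous fun p : ℝ × E => p.2 + p.1 • θ p.2 :=
    continuous_snd.add (continuous_fst.smul (hθ.comp continuous_snd))
  have hA' : Continuous fun p : ℝ × E => A p.2 := hA.comp continuous_snd
  have hF' : Continuous fun p : ℝ × E =>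
      deriv (fun s : ℝ => (1 + s • A p.2).det) p.1 * f (p.2 + p.1 • θ p.2)
        + (1 + p.1 • A p.2).det * fderiv ℝ f (p.2 + p.1 • θ p.2) (θ p.2) :=
    ((continuous_deriv_det_one_add_smul.comp (continuous_fst.prodMk hA')).mul
      (hf.continuous.comp hT)).add
    ((continuous_const.add (continuous_fst.smul hA')).matrix_det.mul
      (((hf.continuous_fderiv one_ne_zero).comp hT).clm_apply (hθ.comp continuous_snd)))
  have hdet₀ : ∀ x, deriv (fun s : ℝ => (1 + s • A x).det) 0 = (A x).trace := fun x =>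
    (hasDerivAt_det_one_add_smul_zero (A x)).deriv
  simpa [hdet₀] using tendstoUniformlyOn_slope_of_continuous_deriv hK hF hF'

theorem TendstoUniformlyOn.sq_sub {ι α : Type*} {l : Filter ι} {s : Set α} {F : ι → α → ℝ}
    {f : α → ℝ} (h : TendstoUniformlyOn F f l s) :
    TendstoUniformlyOn (fun t x => (F t x - f x) ^ 2) 0 l s := by
  rw [Metric.tendstoUniformlyOn_iff] at h ⊢
  intro ε hε
  filter_upwards [h √ε (Real.sqrt_pos.2 hε)] with t ht x hx
  have hlt := ht x hx
  rw [Real.dist_eq, abs_sub_comm, Real.lt_sqrt (abs_nonneg _), sq_abs] at hlt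
  rwa [Pi.zero_apply, Real.dist_eq, zero_sub, abs_neg, abs_of_nonneg (sq_nonneg _)]

theorem tendsto_setIntegral_of_tendstoUniformlyOn_zero {ι α E : Type*} [MeasurableSpace α]
    [NormedAddCommGroup E] [NormedSpace ℝ E] {μ : Measure α} {s : Set α} {l : Filter ι}
    {F : ι → α → E} (hs : μ s < ⊤) (h : TendstoUniformlyOn F 0 l s) :
    Tendsto (fun t => ∫ x in s, F t x ∂μ) l (𝓝 0) := by
  rw [Metric.tendstoUniformlyOn_iff] at h
  rw [Metric.tendsto_nhds]
  intro ε hε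
  have hm : 0 ≤ μ.real s := measureReal_nonneg
  filter_upwards [h (ε / (μ.real s + 1)) (by positivity)] with t ht
  rw [dist_zero_right]
  calc ‖∫ x in s, F t x ∂μ‖ ≤ ε / (μ.real s + 1) * μ.real s :=
        norm_setIntegral_le_of_norm_le_const hs fun x hx => by
          simpa [dist_comm, dist_zero_right] using (ht x hx).le
    _ < ε := by
        rw [div_mul_eq_mul_div, div_lt_iff₀ (by positivity)]
        nlinarith

theorem fderiv_apply_eq_sum_pd {d : ℕ} (f : (Fin d → ℝ) → ℝ) (x v : Fin d → ℝ) :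
    fderiv ℝ f x v = ∑ i, v i * pd f i x := by
  conv_lhs => rw [← Finset.univ_sum_single v]
  simp only [map_sum, pd]
  refine Finset.sum_congr rfl fun i _ => ?_
  rw [← smul_eq_mul, ← map_smul, ← Pi.single_smul', smul_eq_mul, mul_one]

theorem trace_jac {d : ℕ} (θ : (Fin d → ℝ) → (Fin d → ℝ)) (x : Fin d → ℝ) :
    (jac θ x).trace = divg θ x := rfl

theorem continuous_jac {d : ℕ} {θ : (Fin d → ℝ) → (Fin d → ℝ)} (hθ : ContDiff ℝ 1 θ) :
    Continuous (jac θ) :=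
  continuous_matrix fun i _ =>
    (((contDiff_apply ℝ ℝ i).comp hθ).continuous_fderiv one_ne_zero).clm_apply continuous_const

theorem divg_smul {d : ℕ} {f : (Fin d → ℝ) → ℝ} {θ : (Fin d → ℝ) → (Fin d → ℝ)}
    {x : Fin d → ℝ} (hf : DifferentiableAt ℝ f x) (hθ : DifferentiableAt ℝ θ x) :
    divg (fun y => f y • θ y) x = f x * divg θ x + fderiv ℝ f x (θ x) := by
  have hθi := differentiableAt_pi.1 hθ
  rw [fderiv_apply_eq_sum_pd, divg, divg, Finset.mul_sum, ← Finset.sum_add_distrib]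
  refine Finset.sum_congr rfl fun i _ => ?_
  simp only [pd, Pi.smul_apply, smul_eq_mul, fderiv_fun_mul hf (hθi i)]
  simp

theorem stmt19_general {d : ℕ} (Ω : Set (Fin d → ℝ)) (hΩb : Bornology.IsBounded Ω)
    (θ : (Fin d → ℝ) → (Fin d → ℝ)) (hθ : ContDiff ℝ 1 θ)
    (u : (Fin d → ℝ) → (Fin d → ℝ)) (hu : ContDiff ℝ 2 u) :
    ∀ j : Fin d,
      Filter.Tendsto
        (fun t : ℝ => ∫ x in Ω,
          ((Matrix.det (1 + t • jac θ x) * u (x + t • θ x) j - u x j) / t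
              - divg (fun y => u y j • θ y) x) ^ 2)
        (nhdsWithin (0 : ℝ) (Set.Ioi 0)) (nhds 0) := by
  intro j
  have huj : ContDiff ℝ 1 (fun y => u y j) := (contDiff_apply ℝ ℝ j).comp (hu.of_le one_le_two)
  have hdivg : ∀ x, (jac θ x).trace * u x j + fderiv ℝ (fun y => u y j) x (θ x)
      = divg (fun y => u y j • θ y) x := fun x => by
    rw [divg_smul (huj.differentiable one_ne_zero x) (hθ.differentiable one_ne_zero x),
      trace_jac, mul_comm]
  have hslope := (tendstoUniformlyOn_slope_det_mul_comp hΩb.isCompact_closure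
    (continuous_jac hθ) hθ.continuous huj).mono subset_closure
  simp only [hdivg] at hslope
  exact tendsto_setIntegral_of_tendstoUniformlyOn_zero hΩb.measure_lt_top hslope.sq_sub

/-- for a `C^{1,1}` vector field `θ` and `u ∈ H²(U)^d` (here a C² field on
a set `U` containing `Ω̄`, with `Ω` bounded), setting `T_t = id + tθ` and
`I_t = det(DT_t) = det(1 + t·Dθ)`, the map `t ↦ I_t (u ∘ T_t)` is differentiable at
`t = 0` in `L²(Ω)^d` with derivative `∇·(u ⊗ θ) = (div(u_j θ))_j`, i.e. componentwise
`(I_t u∘T_t − u)/t → div(u_j θ)` in `L²(Ω)` as `t → 0⁺`. -/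
theorem stmt19 {d : ℕ} (U Ω : Set (Fin d → ℝ)) (hU : IsOpen U) (hΩ : closure Ω ⊆ U)
    (hΩmeas : MeasurableSet Ω) (hΩb : Bornology.IsBounded Ω)
    (θ : (Fin d → ℝ) → (Fin d → ℝ)) (hθ : ContDiff ℝ 1 θ)
    (hLip : ∃ L, LipschitzWith L (fderiv ℝ θ))
    (u : (Fin d → ℝ) → (Fin d → ℝ)) (hu : ContDiff ℝ 2 u) :
    ∀ j : Fin d,
      Filter.Tendsto
        (fun t : ℝ => ∫ x in Ω,
          ((Matrix.det (1 + t • jac θ x) * u (x + t • θ x) j - u x j) / t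
              - divg (fun y => u y j • θ y) x) ^ 2)
        (nhdsWithin (0 : ℝ) (Set.Ioi 0)) (nhds 0) :=
  stmt19_general Ω hΩb θ hθ u hu
end
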